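/- arXiv:2105.09234 — 6 statements merged into one kernel-verified Lean document; each statement's English description precedes it below -/
import Mathlib

section
/- Let (K, v) be a henselian valued field whose value group vK is not closed in its divisible hull, i.e. there exist n ∈ ℕ and a ∈ vK such that a is not n-divisible in vK while for every c ∈ vK with c > 0 there exists g ∈ vK with |a − n·g| < c. Then the valuation ring 𝒪_v is definable with one parameter in the language of rings: there are an Lr-formula φ(x, y) and an element ε ∈ K such that 𝒪_v = {x ∈ K : K ⊨ φ(x, ε)}. -/
open Polynomial FirstOrder FirstOrder.Ring

section ValuationPrelude

variable {K : Type*} [Field K] {G : Type*} [AddCommGroup G] [LinearOrder G] [IsOrderedAddMonoid G]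

/-- `v : K → G ∪ {∞}` is a (surjective) valuation on the field `K` with value group `G`. -/
def IsValuation (v : K → WithTop G) : Prop :=
  (∀ x, v x = ⊤ ↔ x = 0) ∧
  (∀ x y, v (x * y) = v x + v y) ∧
  (∀ x y, min (v x) (v y) ≤ v (x + y)) ∧
  (∀ g : G, ∃ x, v x = (g : WithTop G))

/-- Hensel's Lemma holds for `(K, v)` for all polynomials of degree at most `n`. -/
def DegLEHenselian (v : K → WithTop G) (n : ℕ) : Prop :=
  ∀ f : Polynomial K, f.natDegree ≤ n → (∀ i, (0 : WithTop G) ≤ v (f.coeff i)) →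
    ∀ a : K, (0 : WithTop G) ≤ v a →
      (0 : WithTop G) < v (f.eval a) →
      ¬ (0 : WithTop G) < v (f.derivative.eval a) →
      ∃ b : K, (0 : WithTop G) ≤ v b ∧ f.eval b = 0 ∧ (0 : WithTop G) < v (b - a)

/-- `(K, v)` is henselian: Hensel's Lemma holds for all polynomials. -/
def IsHenselianValuation (v : K → WithTop G) : Prop :=
  ∀ n : ℕ, DegLEHenselian v n

end ValuationPrelude

/-- A subset `S ⊆ K` is definable with one parameter in the language of rings. -/
def DefinableOneParamRing (K : Type*) [Field K] (S : Set K) : Prop :=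
  letI := compatibleRingOfRing K
  ∃ (φ : Language.ring.Formula (Fin 2)) (ε : K),
    S = {x : K | φ.Realize (fun i : Fin 2 => if i = 0 then x else ε)}

/-!
By Hensel's lemma, for `n ≥ 2` the equation `y ^ n - y = u` is solvable exactly when `v u > 0`,
provided `v u` is not of the form `n • η`. Choose `a ∉ n • vK` that is approximated from below by
elements of `n • vK`, and `t` with `v t = a`. Then `S = {x | ∃ y, y ^ n - y = t x ^ n}` equals
`{x | a + n v x > 0}`, and `𝒪_v = {z | z S ⊆ S}`: integral `z` preserve `S`, while for `v z < 0`
the approximation yields `x ∈ S` with `0 < a + n v x ≤ -n v z`, so that `z x ∉ S`.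
-/

open FirstOrder.Language

section OrderedGroup

variable {G : Type*} [AddCommGroup G] [LinearOrder G] [IsOrderedAddMonoid G]

theorem exists_one_sided_approx {n : ℕ} {a : G} (hnd : ¬ ∃ h : G, a = n • h)
    (happ : ∀ c : G, 0 < c → ∃ g : G, |a - n • g| < c) :
    ∃ b : G, (¬ ∃ h : G, b = n • h) ∧
      ∀ c : G, 0 < c → ∃ g : G, 0 < b - n • g ∧ b - n • g ≤ c := by
  by_cases H : ∀ c : G, 0 < c → ∃ g : G, 0 < a - n • g ∧ a - n • g ≤ c
  · exact ⟨a, hnd, H⟩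
  -- close to `a`, the multiples `n • g` lie above `a`, so those close to `-a` lie below it
  push Not at H
  obtain ⟨c₀, hc₀, Hc₀⟩ := H
  refine ⟨-a, fun ⟨h, hh⟩ => hnd ⟨-h, by rw [smul_neg, ← hh, neg_neg]⟩, fun c hc => ?_⟩
  obtain ⟨g, hg⟩ := happ (min c c₀) (lt_min hc hc₀)
  have hne : a - n • g ≠ 0 := fun h => hnd ⟨g, sub_eq_zero.mp h⟩
  rcases hne.lt_or_gt with hlt | hgt
  · refine ⟨-g, ?_, ?_⟩ <;> rw [smul_neg, neg_sub_neg]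
    · exact sub_pos.mpr (sub_neg.mp hlt)
    · calc n • g - a ≤ |a - n • g| := abs_sub_comm a (n • g) ▸ le_abs_self _
        _ ≤ c := hg.le.trans (min_le_left c c₀)
  · exact absurd (Hc₀ g hgt) (not_lt.mpr ((le_abs_self _).trans (hg.le.trans (min_le_right c c₀))))

end OrderedGroup

section Valuation

variable {K : Type*} [Field K] {G : Type*} [AddCommGroup G] [LinearOrder G] [IsOrderedAddMonoid G]

theorem IsValuation.map_one {v : K → WithTop G} (hval : IsValuation v) : v 1 = 0 := by
  obtain ⟨g, hg⟩ := WithTop.ne_top_iff_exists.mp ((hval.1 1).not.mpr one_ne_zero)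
  have h := hval.2.1 1 1
  rw [one_mul, ← hg] at h
  have : g = g + g := by exact_mod_cast h
  rw [← hg, left_eq_add.mp this, WithTop.coe_zero]

def IsValuation.toAddValuation {v : K → WithTop G} (hval : IsValuation v) :
    AddValuation K (WithTop G) :=
  AddValuation.of v ((hval.1 0).2 rfl) hval.map_one hval.2.2.1 hval.2.1

variable (w : AddValuation K (WithTop G))

theorem exists_pow_sub_self_eq_of_henselian (hhens : IsHenselianValuation w) {n : ℕ}
    (hn : 2 ≤ n) {u : K} (hu : 0 < w u) : ∃ y : K, y ^ n - y = u := by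
  have hdeg : (X ^ n - X - C u).natDegree ≤ n := by
    refine (natDegree_sub_le _ _).trans (max_le ((natDegree_sub_le _ _).trans ?_) ?_)
    · simp only [natDegree_X_pow, natDegree_X]
      omega
    · simp
  have hcoeff : ∀ i, 0 ≤ w ((X ^ n - X - C u).coeff i) := by
    intro i
    simp only [coeff_sub, coeff_X_pow, coeff_X, coeff_C]
    refine w.map_le_sub (w.map_le_sub ?_ ?_) ?_ <;> split_ifs <;> simp [hu.le]
  have hderiv : (X ^ n - X - C u).derivative.eval 0 = -1 := by
    simp [derivative_X_pow, zero_pow (by omega : n - 1 ≠ 0)]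
  obtain ⟨y, -, hy, -⟩ := hhens n (X ^ n - X - C u) hdeg hcoeff 0 (by simp)
    (by simpa [zero_pow (by omega : n ≠ 0)] using hu) (by rw [hderiv]; simp)
  exact ⟨y, sub_eq_zero.mp (by simpa using hy)⟩

/-- If `w y < 0` then `y ^ n` dominates in `y ^ n - y`; otherwise `y ^ n - y` is integral. -/
theorem exists_valuation_pow_sub_self_eq_nsmul {n : ℕ} (hn : 2 ≤ n) {y : K}
    (hy : w (y ^ n - y) ≤ 0) : ∃ η : G, w (y ^ n - y) = ↑(n • η) := by
  rcases le_or_gt 0 (w y) with hy0 | hy0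
  · refine ⟨0, ?_⟩
    rw [smul_zero, WithTop.coe_zero]
    exact le_antisymm hy <| w.map_le_sub (by rw [w.map_pow]; exact nsmul_nonneg hy0 n) hy0
  obtain ⟨η, hη⟩ := WithTop.ne_top_iff_exists.mp hy0.ne_top
  have hη0 : η < 0 := by rw [← hη] at hy0; exact_mod_cast hy0
  have hlt : n • η < η := by
    obtain ⟨m, rfl⟩ : ∃ m, n = m + 1 + 1 := ⟨n - 2, by omega⟩
    rw [succ_nsmul]
    exact add_lt_of_neg_left η (Right.nsmul_neg (Nat.succ_pos m) hη0)
  have hpow : w (y ^ n) = ↑(n • η) := by rw [w.map_pow, ← hη, WithTop.coe_nsmul]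
  refine ⟨η, ?_⟩
  rw [w.map_sub_eq_of_lt_left (by rw [hpow, ← hη]; exact_mod_cast hlt), hpow]

theorem exists_pow_sub_self_eq_iff (hhens : IsHenselianValuation w) {n : ℕ} (hn : 2 ≤ n)
    {u : K} (hu : ∀ η : G, w u ≠ ↑(n • η)) : (∃ y : K, y ^ n - y = u) ↔ 0 < w u := by
  refine ⟨?_, exists_pow_sub_self_eq_of_henselian w hhens hn⟩
  rintro ⟨y, rfl⟩
  by_contra h
  obtain ⟨η, hη⟩ := exists_valuation_pow_sub_self_eq_nsmul w hn (not_lt.mp h)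
  exact hu η hη

theorem valuation_mul_pow_ne_nsmul {n : ℕ} {t : K} {a : G} (ht : w t = a)
    (ha : ¬ ∃ h : G, a = n • h) (x : K) (η : G) : w (t * x ^ n) ≠ ↑(n • η) := by
  rw [w.map_mul, w.map_pow, ht]
  cases hx : w x with
  | top =>
    rcases n with _ | n
    · simpa using ha
    · rw [succ_nsmul, add_top, add_top]
      exact WithTop.top_ne_coe
  | coe ξ =>
    intro h
    have h' : a + n • ξ = n • η := by exact_mod_cast h
    exact ha ⟨η - ξ, by rw [smul_sub, ← h', add_sub_cancel_right]⟩

/-- If `w z < 0`, choose `x` with `0 < w (t x ^ n) ≤ -n w z`; then `w (t (z x) ^ n) ≤ 0`. -/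
theorem valuation_nonneg_iff_forall_pos {n : ℕ} (hn : 0 < n)
    (hsurj : ∀ g : G, ∃ x, w x = g) {t : K} {a : G} (ht : w t = a)
    (happ : ∀ c : G, 0 < c → ∃ g : G, 0 < a - n • g ∧ a - n • g ≤ c) (z : K) :
    0 ≤ w z ↔ ∀ x : K, 0 < w (t * x ^ n) → 0 < w (t * (z * x) ^ n) := by
  have hmul : ∀ x, w (t * (z * x) ^ n) = w (t * x ^ n) + n • w z := fun x => by
    rw [show t * (z * x) ^ n = t * x ^ n * z ^ n by ring, w.map_mul, w.map_pow]
  refine ⟨fun hz x hx => hmul x ▸ lt_add_of_lt_of_nonneg hx (nsmul_nonneg hz n), fun h => ?_⟩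
  by_contra! hz
  obtain ⟨ζ, hζ⟩ := WithTop.ne_top_iff_exists.mp hz.ne_top
  have hζ0 : ζ < 0 := by rw [← hζ] at hz; exact_mod_cast hz
  obtain ⟨g, hg_pos, hg_le⟩ := happ (-(n • ζ)) (neg_pos.mpr (Right.nsmul_neg hn hζ0))
  obtain ⟨x, hx⟩ := hsurj (-g)
  have hvx : w (t * x ^ n) = ↑(a - n • g) := by
    rw [w.map_mul, w.map_pow, ht, hx, ← WithTop.coe_nsmul, ← WithTop.coe_add, smul_neg,
      sub_eq_add_neg]
  have hle : a - n • g + n • ζ ≤ 0 := by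
    simpa using add_le_add_left hg_le (n • ζ)
  refine (h x (by rw [hvx]; exact_mod_cast hg_pos)).not_ge ?_
  rw [hmul, hvx, ← hζ, ← WithTop.coe_nsmul, ← WithTop.coe_add]
  exact_mod_cast hle

end Valuation

section RingFormula

def ringTermPow {α : Type*} (s : Language.ring.Term α) : ℕ → Language.ring.Term α
  | 0 => 1
  | k + 1 => ringTermPow s k * s

@[simp]
theorem realize_ringTermPow {α R : Type*} [Ring R] [CompatibleRing R]
    (s : Language.ring.Term α) (k : ℕ) (f : α → R) :
    (ringTermPow s k).realize f = s.realize f ^ k := by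
  induction k with
  | zero => simp [ringTermPow]
  | succ k ih => simp [ringTermPow, pow_succ, ih]

/-- `∀ x, (∃ y, y ^ n - y = ε x ^ n) → ∃ y, y ^ n - y = ε (z x) ^ n`, with free variables
`z = 0` and `ε = 1`. -/
def valuationRingFormula (n : ℕ) : Language.ring.Formula (Fin 2) :=
  let z : Language.ring.Term (Fin 2 ⊕ Fin 2) := var (Sum.inl 0)
  let ε : Language.ring.Term (Fin 2 ⊕ Fin 2) := var (Sum.inl 1)
  let x : Language.ring.Term (Fin 2 ⊕ Fin 2) := var (Sum.inr 0)
  let y : Language.ring.Term (Fin 2 ⊕ Fin 2) := var (Sum.inr 1)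
  let isPowSubSelf (s : Language.ring.Term (Fin 2 ⊕ Fin 2)) :
      Language.ring.BoundedFormula (Fin 2) 1 :=
    (Term.bdEqual (ringTermPow y n + -y) s).ex
  (isPowSubSelf (ε * ringTermPow x n)).imp (isPowSubSelf (ε * ringTermPow (z * x) n)) |>.all

theorem realize_valuationRingFormula {K : Type*} [Field K] [CompatibleRing K] (n : ℕ)
    (f : Fin 2 → K) :
    (valuationRingFormula n).Realize f ↔
      ∀ x : K, (∃ y : K, y ^ n - y = f 1 * x ^ n) → ∃ y : K, y ^ n - y = f 1 * (f 0 * x) ^ n := by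
  simp [valuationRingFormula, Formula.Realize, Fin.snoc, sub_eq_add_neg]

end RingFormula

theorem stmt0 {K : Type*} [Field K] {G : Type*} [AddCommGroup G] [LinearOrder G] [IsOrderedAddMonoid G]
    (v : K → WithTop G) (hval : IsValuation v) (hhens : IsHenselianValuation v)
    (hG : ∃ (n : ℕ) (a : G), 0 < n ∧ (¬ ∃ h : G, a = n • h) ∧
      ∀ c : G, 0 < c → ∃ g : G, |a - n • g| < c) :
    DefinableOneParamRing K {x : K | (0 : WithTop G) ≤ v x} := by
  obtain ⟨n, a, hn, hnd, happ⟩ := hG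
  have hn2 : 2 ≤ n := by
    by_contra! h
    obtain rfl : n = 1 := by omega
    exact hnd ⟨a, (one_nsmul a).symm⟩
  obtain ⟨b, hbnd, hbapp⟩ := exists_one_sided_approx hnd happ
  obtain ⟨t, ht⟩ := hval.2.2.2 b
  let w := hval.toAddValuation
  let _ := compatibleRingOfRing K
  refine ⟨valuationRingFormula n, t, Set.ext fun z => ?_⟩
  simp only [Set.mem_ofPred_eq, realize_valuationRingFormula, one_ne_zero, ↓reduceIte]
  simp only [exists_pow_sub_self_eq_iff w hhens hn2 (valuation_mul_pow_ne_nsmul w ht hbnd _)]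
  exact valuation_nonneg_iff_forall_pos w hn hval.2.2.2 ht hbapp z
end

section
/- Let G be a nontrivial linearly ordered abelian group and let D be a divisible linearly ordered abelian group containing G as an ordered subgroup such that every element of D has a positive integer multiple lying in G (so D is a divisible hull of G). Then G is a closed subset of D with respect to the order topology on D if and only if for every n ∈ ℕ and every a ∈ G the following holds: if for every b ∈ G with b > 0 there exists g ∈ G with |a − n·g| < b, then a is n-divisible in G (i.e. a = n·h for some h ∈ G). -/
/-!
If `G` has a least positive element `μ`, an element `a ∈ G` lying within `μ` of some `n • g` equals
it. Otherwise every positive element of `G` can be halved within `G`, and since each `c > 0` in `D`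
has a multiple `m • c ∈ G` with `m < 2 ^ m`, `G` has positive elements below `c`. So `G` is dense
in `D`, and approximability of `a = n • e` puts `e` in the closure of `G`. Conversely, if `d` lies
in the closure of `G` and `m • d ∈ G`, then `m • d` is approximable by `m`-multiples of `G`, and
the criterion gives `d ∈ G` because `D` is torsion-free.
-/

namespace AddSubgroup

variable {D : Type*} [AddCommGroup D] [LinearOrder D] [IsOrderedAddMonoid D] (G : AddSubgroup D)

def IsApproxNSMul (n : ℕ) (a : D) : Prop :=
  ∀ b ∈ G, 0 < b → ∃ g ∈ G, |a - n • g| < b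

variable {G}

theorem exists_pos_two_nsmul_le (hmin : ∀ μ, ¬IsLeast {b | b ∈ G ∧ 0 < b} μ) {b : D}
    (hb : b ∈ G) (hb₀ : 0 < b) : ∃ b' ∈ G, 0 < b' ∧ 2 • b' ≤ b := by
  obtain ⟨b', hb'G, hb'₀, hb'b⟩ : ∃ b' ∈ G, 0 < b' ∧ b' < b := by
    simpa [IsLeast, lowerBounds, hb, hb₀] using hmin b
  refine ⟨min b' (b - b'), ?_, lt_min hb'₀ (sub_pos.2 hb'b), ?_⟩
  · rcases min_choice b' (b - b') with h | h <;> rw [h]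
    exacts [hb'G, sub_mem hb hb'G]
  · calc 2 • min b' (b - b') = min b' (b - b') + min b' (b - b') := two_nsmul _
      _ ≤ b' + (b - b') := add_le_add (min_le_left _ _) (min_le_right _ _)
      _ = b := add_sub_cancel _ _

theorem exists_pos_two_pow_nsmul_le (hmin : ∀ μ, ¬IsLeast {b | b ∈ G ∧ 0 < b} μ) (j : ℕ)
    {b : D} (hb : b ∈ G) (hb₀ : 0 < b) : ∃ b' ∈ G, 0 < b' ∧ 2 ^ j • b' ≤ b := by
  induction j generalizing b with
  | zero => exact ⟨b, hb, hb₀, by simp⟩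
  | succ j ih =>
    obtain ⟨b', hb'G, hb'₀, hb'b⟩ := exists_pos_two_nsmul_le hmin hb hb₀
    obtain ⟨b'', hb''G, hb''₀, hb''b'⟩ := ih hb'G hb'₀
    refine ⟨b'', hb''G, hb''₀, ?_⟩
    calc 2 ^ (j + 1) • b'' = 2 • 2 ^ j • b'' := by rw [pow_succ, mul_nsmul]
      _ ≤ 2 • b' := nsmul_le_nsmul_right hb''b' 2
      _ ≤ b := hb'b

theorem exists_pos_le_of_not_isLeast (hmin : ∀ μ, ¬IsLeast {b | b ∈ G ∧ 0 < b} μ) {c : D}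
    (hc : 0 < c) {m : ℕ} (hm : 0 < m) (hmc : m • c ∈ G) : ∃ b ∈ G, 0 < b ∧ b ≤ c := by
  obtain ⟨b, hbG, hb₀, hb⟩ := exists_pos_two_pow_nsmul_le hmin m hmc (nsmul_pos hc hm.ne')
  refine ⟨b, hbG, hb₀, (nsmul_le_nsmul_iff_right hm.ne').1 ?_⟩
  exact (nsmul_le_nsmul_left hb₀.le Nat.lt_two_pow_self.le).trans hb

theorem IsApproxNSMul.exists_eq_nsmul_of_isLeast {n : ℕ} {a μ : D} (happrox : G.IsApproxNSMul n a)
    (ha : a ∈ G) (hμ : IsLeast {b | b ∈ G ∧ 0 < b} μ) : ∃ h ∈ G, a = n • h := by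
  obtain ⟨g, hg, hlt⟩ := happrox μ hμ.1.1 hμ.1.2
  refine ⟨g, hg, sub_eq_zero.1 ?_⟩
  by_contra hne
  exact hlt.not_ge (hμ.2 ⟨abs_mem_iff.2 (sub_mem ha (nsmul_mem hg n)), abs_pos.2 hne⟩)

variable [TopologicalSpace D] [OrderTopology D] [Nontrivial D]

theorem IsApproxNSMul.mem_closure {n : ℕ} {e : D} (happrox : G.IsApproxNSMul n (n • e))
    (hn : 0 < n) (hsmall : ∀ ε, 0 < ε → ∃ b ∈ G, 0 < b ∧ b ≤ ε) :
    e ∈ _root_.closure (G : Set D) := by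
  rw [mem_closure_iff_nhds_basis (nhds_basis_abs_sub_lt e)]
  intro ε hε
  obtain ⟨b, hbG, hb₀, hbε⟩ := hsmall ε hε
  obtain ⟨g, hg, hlt⟩ := happrox b hbG hb₀
  refine ⟨g, hg, ?_⟩
  calc |g - e| = 1 • |e - g| := by rw [one_nsmul, abs_sub_comm]
    _ ≤ n • |e - g| := nsmul_le_nsmul_left (abs_nonneg _) hn
    _ = |n • e - n • g| := by rw [← abs_nsmul, nsmul_sub]
    _ < ε := hlt.trans_le hbε

theorem isApproxNSMul_of_mem_closure {m : ℕ} (hm : 0 < m) (hdiv : ∀ b : D, ∃ ε, m • ε = b)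
    {d : D} (hd : d ∈ _root_.closure (G : Set D)) : G.IsApproxNSMul m (m • d) := by
  rw [mem_closure_iff_nhds_basis (nhds_basis_abs_sub_lt d)] at hd
  intro b _ hb₀
  obtain ⟨ε, rfl⟩ := hdiv b
  obtain ⟨g, hg, hlt⟩ := hd ε ((nsmul_pos_iff hm.ne').1 hb₀)
  refine ⟨g, hg, ?_⟩
  rw [← nsmul_sub, abs_nsmul, abs_sub_comm]
  exact nsmul_lt_nsmul_right hm.ne' hlt

end AddSubgroup

theorem stmt3 {D : Type*} [AddCommGroup D] [LinearOrder D] [IsOrderedAddMonoid D]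
    [TopologicalSpace D] [OrderTopology D]
    (hdiv : ∀ d : D, ∀ n : ℕ, 0 < n → ∃ e : D, n • e = d)
    (G : AddSubgroup D) (hnt : G ≠ ⊥)
    (hhull : ∀ d : D, ∃ m : ℕ, 0 < m ∧ m • d ∈ G) :
    IsClosed (G : Set D) ↔
      ∀ n : ℕ, 0 < n → ∀ a ∈ G,
        (∀ b ∈ G, 0 < b → ∃ g ∈ G, |a - n • g| < b) →
        ∃ h ∈ G, a = n • h := by
  obtain ⟨⟨x, _⟩, hx⟩ := (AddSubgroup.ne_bot_iff_exists_ne_zero).1 hnt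
  have : Nontrivial D := nontrivial_of_ne x 0 (by simpa using hx)
  constructor
  · intro hclosed n hn a ha happrox
    obtain ⟨e, rfl⟩ := hdiv a n hn
    by_cases hmin : ∃ μ, IsLeast {b | b ∈ G ∧ 0 < b} μ
    · obtain ⟨μ, hμ⟩ := hmin
      exact AddSubgroup.IsApproxNSMul.exists_eq_nsmul_of_isLeast happrox ha hμ
    · push Not at hmin
      have hsmall : ∀ ε, 0 < ε → ∃ b ∈ G, 0 < b ∧ b ≤ ε := fun ε hε =>
        let ⟨m, hm, hmε⟩ := hhull ε
        AddSubgroup.exists_pos_le_of_not_isLeast hmin hε hm hmε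
      have he := AddSubgroup.IsApproxNSMul.mem_closure happrox hn hsmall
      exact ⟨e, hclosed.closure_subset he, rfl⟩
  · intro H
    refine closure_subset_iff_isClosed.1 fun d hd => ?_
    obtain ⟨m, hm, hmd⟩ := hhull d
    obtain ⟨h, hh, hmh⟩ :=
      H m hm _ hmd (AddSubgroup.isApproxNSMul_of_mem_closure hm (fun b => hdiv b m hm) hd)
    rwa [nsmul_right_injective hm.ne' hmh]
end

section
/- Let G be a densely ordered abelian group (for all x < y in G there is z ∈ G with x < z < y). Suppose there exist n ∈ ℕ and a convex subgroup C of G such that C is n-regular but not n-divisible (some element of C is not of the form n·z with z ∈ C). Then there exists a ∈ G such that a is not n-divisible in G and for every c ∈ G with c > 0 there exists g ∈ G with |a − n·g| < c; in particular, G is not closed in its divisible hull. -/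
/-! Take `a ∈ C` not `n`-divisible in `C`. It is not `n`-divisible in `G` either, since
`|h| ≤ |n • h|` and convexity pull any divisor back into `C`. Around `a`, every interval of
radius at most `|a|` lies in `C` and, by density, is infinite, so `n`-regularity puts an
`n`-multiple in it. -/

section ConvexSubgroup

variable {G : Type*} [AddCommGroup G] [LinearOrder G] [IsOrderedAddMonoid G] {C : AddSubgroup G}

theorem AddSubgroup.mem_of_abs_le_abs (hconv : ∀ c ∈ C, ∀ g : G, 0 ≤ g → g ≤ c → g ∈ C)
    {c x : G} (hc : c ∈ C) (hx : |x| ≤ |c|) : x ∈ C :=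
  abs_mem_iff.mp (hconv _ (abs_mem_iff.mpr hc) _ (abs_nonneg x) hx)

theorem AddSubgroup.mem_of_nsmul_mem (hconv : ∀ c ∈ C, ∀ g : G, 0 ≤ g → g ≤ c → g ∈ C)
    {n : ℕ} (hn : n ≠ 0) {x : G} (hx : n • x ∈ C) : x ∈ C :=
  C.mem_of_abs_le_abs hconv hx (by rw [abs_nsmul]; exact le_self_nsmul (abs_nonneg x) hn)

theorem AddSubgroup.Ioo_subset_of_le_abs (hconv : ∀ c ∈ C, ∀ g : G, 0 ≤ g → g ≤ c → g ∈ C)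
    {a r : G} (ha : a ∈ C) (hr : r ≤ |a|) : Set.Ioo (a - r) (a + r) ⊆ C := by
  intro x ⟨hx₁, hx₂⟩
  have hxa : |x - a| ≤ |a| :=
    (abs_sub_lt_iff.2 ⟨sub_lt_iff_lt_add'.2 hx₂, sub_lt_comm.1 hx₁⟩).le.trans hr
  simpa using C.add_mem (C.mem_of_abs_le_abs hconv ha hxa) ha

theorem AddSubgroup.exists_abs_sub_nsmul_lt [DenselyOrdered G] {n : ℕ}
    (hconv : ∀ c ∈ C, ∀ g : G, 0 ≤ g → g ≤ c → g ∈ C)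
    (hreg : ∀ S : Set G, S ⊆ (C : Set G) → S.Infinite →
      (∀ x ∈ S, ∀ y ∈ S, ∀ z ∈ C, x ≤ z → z ≤ y → z ∈ S) →
      ∃ s ∈ S, ∃ z ∈ C, s = n • z)
    {a : G} (ha : a ∈ C) (ha₀ : a ≠ 0) {c : G} (hc : 0 < c) : ∃ g : G, |a - n • g| < c := by
  set r := min c |a|
  have hr : 0 < r := lt_min hc (abs_pos.mpr ha₀)
  have hS : (Set.Ioo (a - r) (a + r)).Infinite :=
    Set.Ioo_infinite ((sub_lt_self a hr).trans (lt_add_of_pos_right a hr))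
  obtain ⟨_, ⟨hs₁, hs₂⟩, g, -, rfl⟩ := hreg _ (C.Ioo_subset_of_le_abs hconv ha (min_le_right _ _))
    hS fun x hx y hy z _ hxz hzy => ⟨hx.1.trans_le hxz, hzy.trans_lt hy.2⟩
  exact ⟨g, (abs_sub_lt_iff.2 ⟨sub_lt_comm.1 hs₁, sub_lt_iff_lt_add'.2 hs₂⟩).trans_le
    (min_le_left _ _)⟩

end ConvexSubgroup

theorem stmt4 {G : Type*} [AddCommGroup G] [LinearOrder G] [IsOrderedAddMonoid G] [DenselyOrdered G]
    (n : ℕ) (hn : 0 < n) (C : AddSubgroup G)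
    (hconv : ∀ c ∈ C, ∀ g : G, 0 ≤ g → g ≤ c → g ∈ C)
    (hreg : ∀ S : Set G, S ⊆ (C : Set G) → S.Infinite →
      (∀ x ∈ S, ∀ y ∈ S, ∀ z ∈ C, x ≤ z → z ≤ y → z ∈ S) →
      ∃ s ∈ S, ∃ z ∈ C, s = n • z)
    (hndiv : ∃ c ∈ C, ¬ ∃ z ∈ C, c = n • z) :
    ∃ a : G, (¬ ∃ h : G, a = n • h) ∧ ∀ c : G, 0 < c → ∃ g : G, |a - n • g| < c := by
  obtain ⟨a, ha, hndiv⟩ := hndiv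
  have ha₀ : a ≠ 0 := by
    rintro rfl
    exact hndiv ⟨0, C.zero_mem, (nsmul_zero n).symm⟩
  refine ⟨a, ?_, fun c hc => C.exists_abs_sub_nsmul_lt hconv hreg ha ha₀ hc⟩
  rintro ⟨h, rfl⟩
  exact hndiv ⟨h, C.mem_of_nsmul_mem hconv hn.ne' ha, rfl⟩
end

section
/- Let H be the group of all functions s : ℕ → ℤ under pointwise addition, linearly ordered by: s > 0 iff s(min supp(s)) > 0, where supp(s) = {k ∈ ℕ : s(k) ≠ 0} and min is taken with respect to the usual order on ℕ. Let a ∈ H be the constant function with value 2, and let G be the subgroup of H generated by all finitely supported functions together with a. Then a is not 2-divisible in G (there is no h ∈ G with 2·h = a), but for every b ∈ G with b > 0 there exists g ∈ G with |a − 2·g| < b. In particular, G is not closed in its divisible hull. -/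
/-!
Every element of `mixedGroup` agrees, outside a finite set, with an even constant: these
functions form a subgroup containing the generators. A half of `constTwo` would be constantly
`1`, so it is not in `mixedGroup`. On the other hand, if the first nonzero coordinate of `b > 0`
is at `i`, the finitely supported indicator `g` of `[0, i]` leaves `constTwo - 2 • g`, which
is nonnegative and vanishes up to `i`, hence lies below `b`.
-/

/-- The Hahn product over `ω` of copies of `ℤ`: all functions `ℕ → ℤ` with pointwise
addition, ordered lexicographically (`s > 0` iff `s (min supp s) > 0`). -/
noncomputable abbrev HahnProdNatInt : Type := Lex (ℕ → ℤ)

/-- The constant function with value `2`. -/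
noncomputable def constTwo : HahnProdNatInt := toLex (fun _ => (2 : ℤ))

/-- The subgroup generated by the finitely supported functions together with `constTwo`. -/
noncomputable def mixedGroup : AddSubgroup HahnProdNatInt :=
  AddSubgroup.closure
    (insert constTwo {s : HahnProdNatInt | (Function.support (ofLex s)).Finite})

open Filter

def cofiniteEvenConst : AddSubgroup HahnProdNatInt where
  carrier := {s | ∃ n : ℤ, Even n ∧ ∀ᶠ k in cofinite, ofLex s k = n}
  zero_mem' := ⟨0, .zero, .of_forall fun _ => rfl⟩
  add_mem' := by
    rintro x y ⟨m, hm, hx⟩ ⟨n, hn, hy⟩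
    exact ⟨m + n, hm.add hn, (hx.and hy).mono fun k ⟨hxk, hyk⟩ => congr($hxk + $hyk)⟩
  neg_mem' := by
    rintro x ⟨n, hn, hx⟩
    exact ⟨-n, hn.neg, hx.mono fun k hk => congr(-$hk)⟩

lemma mixedGroup_le_cofiniteEvenConst : mixedGroup ≤ cofiniteEvenConst := by
  refine (AddSubgroup.closure_le _).mpr (Set.insert_subset_iff.mpr ⟨?_, fun s hs => ?_⟩)
  · exact ⟨2, even_two, .of_forall fun _ => rfl⟩
  · exact ⟨0, .zero, hs.eventually_cofinite_notMem.mono fun k => Function.notMem_support.mp⟩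

lemma two_nsmul_ne_constTwo {h : HahnProdNatInt} (hh : h ∈ cofiniteEvenConst) :
    2 • h ≠ constTwo := by
  intro heq
  obtain ⟨_, ⟨m, rfl⟩, hev⟩ := hh
  obtain ⟨k, hk⟩ := hev.exists
  have hk2 : ofLex h k + ofLex h k = 2 := by
    rw [two_nsmul] at heq
    exact congr(ofLex $heq k)
  omega

lemma exists_abs_constTwo_sub_two_nsmul_lt {b : HahnProdNatInt} (hb : 0 < b) :
    ∃ g ∈ mixedGroup, |constTwo - 2 • g| < b := by
  -- `<` on `Lex (ℕ → ℤ)` unfolds to: equal below some `i`, smaller at `i`.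
  obtain ⟨i, hb_eq, hb_pos⟩ := hb
  let g : HahnProdNatInt := toLex ((Set.Iic i).indicator 1)
  have hg : g ∈ mixedGroup := AddSubgroup.subset_closure <|
    Or.inr ((Set.finite_Iic i).subset Set.support_indicator_subset)
  have hc : constTwo - 2 • g = toLex ((Set.Ioi i).indicator 2) := by
    funext k
    show (2 : ℤ) - 2 • (Set.Iic i).indicator (1 : ℕ → ℤ) k = (Set.Ioi i).indicator 2 k
    by_cases hk : k ≤ i <;> simp [Set.indicator_apply, hk]
  have hc_nonneg : 0 ≤ toLex ((Set.Ioi i).indicator (2 : ℕ → ℤ)) :=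
    Pi.toLex_monotone fun _ => Set.indicator_nonneg (fun _ _ => zero_le_two) _
  refine ⟨g, hg, ?_⟩
  rw [hc, abs_of_nonneg hc_nonneg]
  refine ⟨i, fun j hj => ?_, ?_⟩
  · exact (Set.indicator_of_notMem (lt_asymm hj) _).trans (hb_eq j hj)
  · exact (Set.indicator_of_notMem (lt_irrefl i) _).trans_lt hb_pos

theorem stmt5 :
    (¬ ∃ h ∈ mixedGroup, 2 • h = constTwo) ∧
      ∀ b ∈ mixedGroup, 0 < b → ∃ g ∈ mixedGroup, |constTwo - 2 • g| < b :=
  ⟨fun ⟨_, hh, heq⟩ => two_nsmul_ne_constTwo (mixedGroup_le_cofiniteEvenConst hh) heq,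
    fun _ _ hb => exists_abs_constTwo_sub_two_nsmul_lt hb⟩
end

section
/- Let H be the group of all functions s : ℕ → ℤ under pointwise addition, linearly ordered by: s > 0 iff s(min supp(s)) > 0, where supp(s) = {k ∈ ℕ : s(k) ≠ 0}. Let a ∈ H be the constant function with value 2, and let G be the subgroup of H generated by all finitely supported functions together with a. Then for every n ∈ ℕ with n ≥ 2, no nontrivial convex subgroup C of G is n-regular; that is, for every nontrivial convex subgroup C of G there exists an infinite convex subset of C containing no element of the form n·z with z ∈ C. -/
private lemma lexLt_iff {f g : ℕ → ℤ} :
    toLex f < toLex g ↔ ∃ i, (∀ j, j < i → f j = g j) ∧ f i < g i := Iff.rfl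

private lemma lexLe_coord {f g : ℕ → ℤ} (h : toLex f ≤ toLex g) (i : ℕ)
    (hag : ∀ j, j < i → f j = g j) : f i ≤ g i := by
  rcases h.lt_or_eq with hlt | heq
  · obtain ⟨i₀, h1, h2⟩ := lexLt_iff.1 hlt
    rcases lt_trichotomy i₀ i with hi | rfl | hi
    · exact absurd (hag i₀ hi) h2.ne
    · exact h2.le
    · exact (h1 i hi).le
  · exact (congrFun (congrArg ofLex heq) i).le

/-- Squeeze lemma: if `b ≤ s ≤ t` lexicographically and `b, t` agree up to `i`,
then `s` agrees with them up to `i`. -/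
private lemma lex_squeeze {b s t : ℕ → ℤ} (hbs : toLex b ≤ toLex s) (hst : toLex s ≤ toLex t)
    (i : ℕ) (hbt : ∀ j, j ≤ i → b j = t j) : ∀ j, j ≤ i → s j = b j := by
  intro j hj
  induction j using Nat.strong_induction_on with
  | _ j ih =>
    have hag : ∀ j', j' < j → b j' = s j' := fun j' hj' => (ih j' hj' (le_of_lt (lt_of_lt_of_le hj' hj))).symm
    have h1 : b j ≤ s j := lexLe_coord hbs j hag
    have h2 : s j ≤ t j := lexLe_coord hst j (fun j' hj' =>
      (ih j' hj' (le_of_lt (lt_of_lt_of_le hj' hj))).trans (hbt j' (le_of_lt (lt_of_lt_of_le hj' hj))))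
    exact le_antisymm (h2.trans_eq (hbt j hj).symm) h1

/-- A single basis vector as an element of the Hahn product. -/
private noncomputable def delta (m : ℕ) : HahnProdNatInt := toLex (Pi.single m 1)

private lemma delta_mem : ∀ m, delta m ∈ mixedGroup := by
  intro m
  apply AddSubgroup.subset_closure
  apply Set.mem_insert_of_mem
  apply (Set.finite_singleton m).subset
  intro j hj
  by_contra hne
  exact hj (Pi.single_eq_of_ne hne 1)

theorem stmt6 (n : ℕ) (hn : 2 ≤ n) (C : AddSubgroup HahnProdNatInt)
    (hCG : C ≤ mixedGroup) (hnt : C ≠ ⊥)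
    (hconv : ∀ c ∈ C, ∀ g ∈ mixedGroup, 0 ≤ g → g ≤ c → g ∈ C) :
    ∃ S : Set HahnProdNatInt, S ⊆ (C : Set HahnProdNatInt) ∧ S.Infinite ∧
      (∀ x ∈ S, ∀ y ∈ S, ∀ z ∈ C, x ≤ z → z ≤ y → z ∈ S) ∧
      ∀ s ∈ S, ¬ ∃ z ∈ C, s = n • z := by
  -- obtain a positive element of C
  obtain ⟨c₀, hc₀C, hc₀⟩ : ∃ c ∈ C, c ≠ 0 := by
    by_contra h
    push_neg at h
    exact hnt (AddSubgroup.eq_bot_iff_forall C |>.2 h)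
  obtain ⟨c, hcC, hc⟩ : ∃ c ∈ C, 0 < c := by
    rcases lt_or_gt_of_ne hc₀ with h | h
    · exact ⟨-c₀, neg_mem hc₀C, neg_pos.2 h⟩
    · exact ⟨c₀, hc₀C, h⟩
  -- k : first nonzero coordinate of c
  obtain ⟨k, hk0, hkpos⟩ : ∃ k, (∀ j, j < k → ofLex c j = 0) ∧ 0 < ofLex c k := by
    obtain ⟨k, h1, h2⟩ := lexLt_iff.1 hc
    exact ⟨k, fun j hj => (h1 j hj).symm, h2⟩
  -- bounds
  set b : HahnProdNatInt := delta (k+1) with hbdef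
  set t : HahnProdNatInt := delta (k+1) + delta (k+2) with htdef
  -- basic coordinates
  have hbcoord : ∀ j : ℕ, ofLex b j = (Pi.single (k+1) (1:ℤ) : ℕ → ℤ) j := fun j => rfl
  have htcoord : ∀ j : ℕ, ofLex t j =
      (Pi.single (k+1) (1:ℤ) : ℕ → ℤ) j + (Pi.single (k+2) (1:ℤ) : ℕ → ℤ) j := fun j => rfl
  -- positivity of nonneg sums of deltas w/ supports above k, and comparison with c
  have hle_c : ∀ g : HahnProdNatInt, (∀ j, j ≤ k → ofLex g j = 0) → g ≤ c := by
    intro g hg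
    have : (0:HahnProdNatInt) < c - g := by
      refine lexLt_iff.2 ⟨k, fun j hj => ?_, ?_⟩
      · show (0:ℤ) = ofLex c j - ofLex g j
        rw [hk0 j hj, hg j hj.le]; ring
      · show (0:ℤ) < ofLex c k - ofLex g k
        rw [hg k le_rfl]; simpa using hkpos
    exact (sub_pos.mp this).le
  -- the set S
  refine ⟨{s | s ∈ C ∧ b ≤ s ∧ s ≤ t}, fun s hs => hs.1, ?_, ?_, ?_⟩
  · -- infinite: the elements delta (k+1) + delta (k+3+m)
    apply Set.infinite_of_injective_forall_mem
      (f := fun m : ℕ => delta (k+1) + delta (k+3+m))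
    · intro m₁ m₂ h
      by_contra hne
      have h' : ∀ j : ℕ, (Pi.single (k+1) (1:ℤ) : ℕ → ℤ) j + (Pi.single (k+3+m₁) (1:ℤ) : ℕ → ℤ) j
          = (Pi.single (k+1) (1:ℤ) : ℕ → ℤ) j + (Pi.single (k+3+m₂) (1:ℤ) : ℕ → ℤ) j :=
        fun j => congrFun (congrArg ofLex h) j
      have := h' (k+3+m₁)
      simp only [Pi.single_apply] at this
      split_ifs at this <;> omega
    · intro m
      set g : HahnProdNatInt := delta (k+1) + delta (k+3+m) with hgdef
      have hgcoord : ∀ j : ℕ, ofLex g j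
          = (Pi.single (k+1) (1:ℤ) : ℕ → ℤ) j + (Pi.single (k+3+m) (1:ℤ) : ℕ → ℤ) j :=
        fun j => rfl
      have hg0 : ∀ j, j ≤ k → ofLex g j = 0 := by
        intro j hj
        rw [hgcoord]; simp only [Pi.single_apply]
        split_ifs <;> omega
      have hgpos : (0:HahnProdNatInt) ≤ g := by
        refine le_of_lt (lexLt_iff.2 ⟨k+1, fun j hj => ?_, ?_⟩)
        · exact (hg0 j (by omega)).symm
        · show (0:ℤ) < ofLex g (k+1)
          rw [hgcoord]; simp only [Pi.single_apply]
          split_ifs <;> omega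
      have hgC : g ∈ C := hconv c hcC g (add_mem (delta_mem _) (delta_mem _)) hgpos (hle_c g hg0)
      refine ⟨hgC, ?_, ?_⟩
      · -- b ≤ g
        refine le_of_lt (lexLt_iff.2 ⟨k+3+m, fun j hj => ?_, ?_⟩)
        · show ofLex b j = ofLex g j
          rw [hgcoord, hbcoord]; simp only [Pi.single_apply]
          split_ifs <;> omega
        · show ofLex b (k+3+m) < ofLex g (k+3+m)
          rw [hgcoord, hbcoord]; simp only [Pi.single_apply]
          split_ifs <;> omega
      · -- g ≤ t
        refine le_of_lt (lexLt_iff.2 ⟨k+2, fun j hj => ?_, ?_⟩)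
        · show ofLex g j = ofLex t j
          rw [hgcoord, htcoord]; simp only [Pi.single_apply]
          split_ifs <;> omega
        · show ofLex g (k+2) < ofLex t (k+2)
          rw [hgcoord, htcoord]; simp only [Pi.single_apply]
          split_ifs <;> omega
  · -- convexity
    rintro x ⟨-, hx1, -⟩ y ⟨-, -, hy2⟩ z hz hxz hzy
    exact ⟨hz, hx1.trans hxz, hzy.trans hy2⟩
  · -- no n-divisible element
    rintro s ⟨-, hbs, hst⟩ ⟨z, -, rfl⟩
    have hbt : ∀ j, j ≤ k+1 → ofLex b j = ofLex t j := by
      intro j hj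
      rw [hbcoord, htcoord]; simp only [Pi.single_apply]
      split_ifs <;> omega
    have h1 : ofLex (n • z) (k+1) = ofLex b (k+1) :=
      lex_squeeze hbs hst (k+1) hbt (k+1) le_rfl
    rw [hbcoord, Pi.single_eq_same] at h1
    have h2 : ofLex (n • z) (k+1) = (n : ℤ) * ofLex z (k+1) := by
      show (n • ofLex z) (k+1) = _
      simp [nsmul_eq_mul]
    rw [h2] at h1
    have : (n : ℤ) ∣ 1 := ⟨ofLex z (k+1), h1.symm⟩
    have := Int.le_of_dvd one_pos this
    omega
end

section
/- Let K be a field such that for every n ∈ ℕ there exists a nontrivial n≤-henselian valuation on K. Then K is t-henselian: there exist a field L and a nontrivial henselian valuation on L such that K and L satisfy the same sentences of the first-order language of rings (K ≡ L in Lr = {+, −, ·, 0, 1}). -/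
open Polynomial

open FirstOrder FirstOrder.Ring FirstOrder.Language

universe u

/-- A (surjective, additively written) valuation on the field `K`,
bundled with its value group. -/
structure ValuationOn (K : Type u) [Field K] : Type (u + 1) where
  Γ : Type u
  [grp : AddCommGroup Γ]
  [grpLO : LinearOrder Γ]
  [grpOrd : IsOrderedAddMonoid Γ]
  v : K → WithTop Γ
  isVal : IsValuation v

attribute [instance] ValuationOn.grp
attribute [instance] ValuationOn.grpLO
attribute [instance] ValuationOn.grpOrd

/-- The valuation `w` is nontrivial. -/
def ValuationOn.Nontriv {K : Type u} [Field K] (w : ValuationOn K) : Prop :=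
  ∃ x : K, x ≠ 0 ∧ w.v x ≠ (0 : WithTop w.Γ)

/-- `(K, w)` is `n≤`-henselian. -/
def ValuationOn.DegLEHens {K : Type u} [Field K] (w : ValuationOn K) (n : ℕ) : Prop :=
  DegLEHenselian w.v n

/-- `(K, w)` is henselian. -/
def ValuationOn.Hens {K : Type u} [Field K] (w : ValuationOn K) : Prop :=
  ∀ n : ℕ, DegLEHenselian w.v n

/-- A henselian field: a field together with a nontrivial henselian valuation on it. -/
structure HenselianFieldBundle : Type (u + 1) where
  L : Type u
  [fld : Field L]
  val : ValuationOn L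
  nontriv : val.Nontriv
  hens : val.Hens

attribute [instance] HenselianFieldBundle.fld

/-- `K` and `L` satisfy the same sentences of the first-order language of rings. -/
def RingElemEquiv (K : Type*) (L : Type*) [Field K] [Field L] : Prop :=
  letI := compatibleRingOfRing K
  letI := compatibleRingOfRing L
  K ≅[Language.ring] L

/-!
Choose for every `n` a nontrivial `n≤`-henselian valuation `wₙ` on `K` and a nonprincipal
ultrafilter `U` on `ℕ`. By Łoś's theorem the ultrapower `K^U` is elementarily equivalent to `K`,
and it carries the ultraproduct valuation `x ↦ [wₙ(xₙ)]` with value group `∏_U Γₙ`, which is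
nontrivial. A polynomial of degree at most `d` over `K^U` has components of degree at most `d`
over `K`, and `U`-almost every `wₙ` satisfies Hensel's Lemma in degree `d`; the componentwise
roots glue to a root in `K^U`, so the ultraproduct valuation is henselian.
-/

namespace Filter.Product

variable {ι : Type*} {l : Filter ι} {G : ι → Type*}

def mk (f : ∀ i, G i) : l.Product G := Quotient.mk'' f

theorem mk_eq_mk {f g : ∀ i, G i} : (mk f : l.Product G) = mk g ↔ ∀ᶠ i in l, f i = g i :=
  Quotient.eq''

section AddCommGroup

variable [∀ i, AddCommGroup (G i)]

instance : Zero (l.Product G) := ⟨mk 0⟩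

instance : Add (l.Product G) :=
  ⟨Quotient.map₂' (· + ·) fun _ _ hf _ _ hg => hf.mp (hg.mono fun _ hg hf => by
    simp only [Pi.add_apply, hf, hg])⟩

instance : Neg (l.Product G) :=
  ⟨Quotient.map' Neg.neg fun _ _ hf => hf.mono fun _ hf => by simp only [Pi.neg_apply, hf]⟩

theorem mk_add (f g : ∀ i, G i) : (mk (f + g) : l.Product G) = mk f + mk g := rfl

instance : AddCommGroup (l.Product G) where
  add_assoc := by rintro ⟨f⟩ ⟨g⟩ ⟨h⟩; exact Quot.sound (.of_forall fun _ => add_assoc _ _ _)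
  zero_add := by rintro ⟨f⟩; exact Quot.sound (.of_forall fun _ => zero_add _)
  add_zero := by rintro ⟨f⟩; exact Quot.sound (.of_forall fun _ => add_zero _)
  neg_add_cancel := by rintro ⟨f⟩; exact Quot.sound (.of_forall fun _ => neg_add_cancel _)
  add_comm := by rintro ⟨f⟩ ⟨g⟩; exact Quot.sound (.of_forall fun _ => add_comm _ _)
  nsmul := nsmulRec
  zsmul := zsmulRec

end AddCommGroup

instance [∀ i, PartialOrder (G i)] : PartialOrder (l.Product G) where
  le x y := Quotient.liftOn₂' x y (fun f g => ∀ᶠ i in l, f i ≤ g i) fun _ _ _ _ hf hg =>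
    propext <| eventually_congr <| hf.mp <| hg.mono fun _ hg hf => by rw [hf, hg]
  le_refl := by rintro ⟨f⟩; exact .of_forall fun _ => le_rfl
  le_trans := by
    rintro ⟨f⟩ ⟨g⟩ ⟨h⟩ hfg hgh
    exact hfg.mp (hgh.mono fun _ hgh hfg => hfg.trans hgh)
  le_antisymm := by
    rintro ⟨f⟩ ⟨g⟩ hfg hgf
    exact Quot.sound (hfg.mp (hgf.mono fun _ hgf hfg => le_antisymm hfg hgf))

theorem mk_le_mk [∀ i, PartialOrder (G i)] {f g : ∀ i, G i} :
    (mk f : l.Product G) ≤ mk g ↔ ∀ᶠ i in l, f i ≤ g i :=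
  Iff.rfl

noncomputable instance {U : Ultrafilter ι} [∀ i, LinearOrder (G i)] :
    LinearOrder ((U : Filter ι).Product G) where
  __ := (inferInstance : PartialOrder ((U : Filter ι).Product G))
  le_total := by rintro ⟨f⟩ ⟨g⟩; exact U.eventually_or.1 (.of_forall fun i => le_total (f i) (g i))
  toDecidableLE := Classical.decRel _

instance [∀ i, AddCommGroup (G i)] [∀ i, PartialOrder (G i)] [∀ i, IsOrderedAddMonoid (G i)] :
    IsOrderedAddMonoid (l.Product G) where
  add_le_add_left := by
    rintro ⟨f⟩ ⟨g⟩ hfg ⟨h⟩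
    exact hfg.mono fun _ hfg => add_le_add_left hfg _

section Zero

variable [∀ i, Zero (G i)] {U : Ultrafilter ι} {a b : ∀ i, WithTop (G i)}

open Classical in
/-- The map `∏_l WithTop (G i) → WithTop (∏_l G i)`, on representatives. -/
noncomputable def mkWithTop (l : Filter ι) (a : ∀ i, WithTop (G i)) : WithTop (l.Product G) :=
  if ∀ᶠ i in l, a i = ⊤ then ⊤ else ((mk fun i => (a i).untopD 0 : l.Product G) : WithTop _)

theorem mkWithTop_eq_top_iff : mkWithTop l a = ⊤ ↔ ∀ᶠ i in l, a i = ⊤ := by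
  unfold mkWithTop
  split_ifs with h <;> simp [h]

theorem mkWithTop_congr (h : ∀ᶠ i in l, a i = b i) : mkWithTop l a = mkWithTop l b := by
  have htop : (∀ᶠ i in l, a i = ⊤) ↔ ∀ᶠ i in l, b i = ⊤ :=
    eventually_congr (h.mono fun i hi => by rw [hi])
  classical
  unfold mkWithTop
  exact if_congr htop rfl (congrArg _ (mk_eq_mk.2 (h.mono fun i hi => by rw [hi])))

theorem mkWithTop_coe [l.NeBot] (g : ∀ i, G i) :
    mkWithTop l (fun i => (g i : WithTop (G i))) = (mk g : l.Product G) := by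
  simp [mkWithTop, ‹l.NeBot›.ne]

theorem mkWithTop_cases (a : ∀ i, WithTop (G i)) :
    (∀ᶠ i in U, a i = ⊤) ∨ ∃ g : ∀ i, G i, ∀ᶠ i in U, a i = g i := by
  refine (U.em _).imp_right fun h => ⟨fun i => (a i).untopD 0, ?_⟩
  filter_upwards [h] with i hi
  obtain ⟨x, hx⟩ := WithTop.ne_top_iff_exists.1 hi
  simp [← hx]

end Zero

section LinearOrder

variable [∀ i, Zero (G i)] [∀ i, LinearOrder (G i)] {U : Ultrafilter ι} {a b : ∀ i, WithTop (G i)}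

theorem mkWithTop_le_mkWithTop_iff :
    mkWithTop U a ≤ mkWithTop U b ↔ ∀ᶠ i in U, a i ≤ b i := by
  rcases mkWithTop_cases b with hb | ⟨h, hb⟩
  · rw [mkWithTop_eq_top_iff.2 hb]
    exact iff_of_true le_top (hb.mono fun i hi => hi ▸ le_top)
  rcases mkWithTop_cases a with ha | ⟨g, ha⟩
  · rw [mkWithTop_eq_top_iff.2 ha, mkWithTop_congr hb, mkWithTop_coe]
    refine iff_of_false (by simp) fun hab => ?_
    obtain ⟨i, hai, hbi, habi⟩ := (ha.and (hb.and hab)).exists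
    simp [hai, hbi] at habi
  · rw [mkWithTop_congr ha, mkWithTop_congr hb, mkWithTop_coe, mkWithTop_coe, WithTop.coe_le_coe,
      mk_le_mk]
    exact eventually_congr (ha.and hb |>.mono fun i ⟨hai, hbi⟩ => by simp [hai, hbi])

theorem mkWithTop_lt_mkWithTop_iff :
    mkWithTop U a < mkWithTop U b ↔ ∀ᶠ i in U, a i < b i := by
  simp only [← not_le, mkWithTop_le_mkWithTop_iff, Ultrafilter.eventually_not]

theorem mkWithTop_inj : mkWithTop U a = mkWithTop U b ↔ ∀ᶠ i in U, a i = b i := by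
  simp only [le_antisymm_iff, mkWithTop_le_mkWithTop_iff, eventually_and]

theorem mkWithTop_min :
    mkWithTop U (fun i => min (a i) (b i)) = min (mkWithTop U a) (mkWithTop U b) := by
  rcases U.eventually_or.1 (.of_forall fun i => le_total (a i) (b i)) with hab | hba
  · rw [min_eq_left (mkWithTop_le_mkWithTop_iff.2 hab)]
    exact mkWithTop_congr (hab.mono fun _ => min_eq_left)
  · rw [min_eq_right (mkWithTop_le_mkWithTop_iff.2 hba)]
    exact mkWithTop_congr (hba.mono fun _ => min_eq_right)

end LinearOrder

variable [∀ i, AddCommGroup (G i)] {U : Ultrafilter ι} {a b : ∀ i, WithTop (G i)}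

theorem mkWithTop_zero : mkWithTop U (0 : ∀ i, WithTop (G i)) = 0 :=
  mkWithTop_coe 0

theorem mkWithTop_add : mkWithTop U (a + b) = mkWithTop U a + mkWithTop U b := by
  rcases mkWithTop_cases a with ha | ⟨g, ha⟩
  · rw [mkWithTop_eq_top_iff.2 ha, WithTop.top_add, mkWithTop_eq_top_iff]
    exact ha.mono fun i hi => by simp [hi]
  rcases mkWithTop_cases b with hb | ⟨h, hb⟩
  · rw [mkWithTop_eq_top_iff.2 hb, WithTop.add_top, mkWithTop_eq_top_iff]
    exact hb.mono fun i hi => by simp [hi]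
  rw [mkWithTop_congr ha, mkWithTop_congr hb, mkWithTop_coe, mkWithTop_coe, ← WithTop.coe_add,
    ← mk_add, ← mkWithTop_coe]
  exact mkWithTop_congr (ha.and hb |>.mono fun i ⟨hai, hbi⟩ => by simp [hai, hbi])

end Filter.Product

theorem DegLEHenselian.mono {K : Type*} [Field K] {G : Type*} [AddCommGroup G] [LinearOrder G]
    [IsOrderedAddMonoid G] {v : K → WithTop G} {m n : ℕ} (h : DegLEHenselian v m) (hnm : n ≤ m) :
    DegLEHenselian v n :=
  fun f hf => h f (hf.trans hnm)

theorem Filter.Germ.eval_map_coeRingHom {ι R : Type*} [Semiring R] (l : Filter ι)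
    (P : (ι → R)[X]) (g : ι → R) :
    (P.map (Germ.coeRingHom l)).eval ↑g =
      ↑(fun i => (P.map (Pi.evalRingHom (fun _ => R) i)).eval (g i)) := by
  rw [eval_map, show (g : Germ l R) = Germ.coeRingHom l g from rfl, eval₂_hom]
  refine congrArg (Germ.coeRingHom l) (funext fun i => ?_)
  rw [eval_map, show g i = Pi.evalRingHom (fun _ => R) i g from rfl, eval₂_hom]
  rfl

open Filter Filter.Product

section Ultrapower

variable {K : Type u} [Field K] {ι : Type} (U : Ultrafilter ι) (w : ι → ValuationOn K)

noncomputable def ultrapowerValuation :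
    Germ (U : Filter ι) K → WithTop ((U : Filter ι).Product fun i => (w i).Γ) :=
  fun x => x.liftOn (fun f => mkWithTop U fun i => (w i).v (f i))
    fun _ _ h => mkWithTop_congr (h.mono fun i hi => by rw [hi])

variable {U w}

theorem ultrapowerValuation_coe (f : ι → K) :
    ultrapowerValuation U w f = mkWithTop U fun i => (w i).v (f i) :=
  rfl

theorem isValuation_ultrapowerValuation : IsValuation (ultrapowerValuation U w) := by
  refine ⟨fun x => x.inductionOn fun f => ?_, fun x y => x.inductionOn₂ y fun f g => ?_,
    fun x y => x.inductionOn₂ y fun f g => ?_, fun γ => γ.inductionOn fun g => ?_⟩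
  · rw [ultrapowerValuation_coe, mkWithTop_eq_top_iff, ← Germ.coe_zero, Germ.coe_eq]
    exact eventually_congr (.of_forall fun i => (w i).isVal.1 (f i))
  · rw [← Germ.coe_mul, ultrapowerValuation_coe, ultrapowerValuation_coe,
      ultrapowerValuation_coe, ← mkWithTop_add]
    exact mkWithTop_congr (.of_forall fun i => (w i).isVal.2.1 (f i) (g i))
  · rw [← Germ.coe_add, ultrapowerValuation_coe, ultrapowerValuation_coe,
      ultrapowerValuation_coe, ← mkWithTop_min, mkWithTop_le_mkWithTop_iff]
    exact .of_forall fun i => (w i).isVal.2.2.1 (f i) (g i)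
  · choose x hx using fun i => (w i).isVal.2.2.2 (g i)
    exact ⟨x, (mkWithTop_congr (.of_forall hx)).trans (mkWithTop_coe g)⟩

variable (U w) in
noncomputable def ValuationOn.ultrapower : ValuationOn (Germ (U : Filter ι) K) where
  Γ := (U : Filter ι).Product fun i => (w i).Γ
  v := ultrapowerValuation U w
  isVal := isValuation_ultrapowerValuation

theorem ValuationOn.zero_le_ultrapower_v_coe {f : ι → K} :
    0 ≤ (ValuationOn.ultrapower U w).v f ↔ ∀ᶠ i in U, 0 ≤ (w i).v (f i) := by
  have h := mkWithTop_le_mkWithTop_iff (U := U) (a := 0) (b := fun i => (w i).v (f i))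
  rwa [mkWithTop_zero] at h

theorem ValuationOn.zero_lt_ultrapower_v_coe {f : ι → K} :
    0 < (ValuationOn.ultrapower U w).v f ↔ ∀ᶠ i in U, 0 < (w i).v (f i) := by
  have h := mkWithTop_lt_mkWithTop_iff (U := U) (a := 0) (b := fun i => (w i).v (f i))
  rwa [mkWithTop_zero] at h

theorem ValuationOn.ultrapower_nontriv (hw : ∀ᶠ i in U, (w i).Nontriv) :
    (ValuationOn.ultrapower U w).Nontriv := by
  obtain ⟨x, hx⟩ := hw.choice
  refine ⟨x, ?_, ?_⟩
  · rw [Ne, ← Germ.coe_zero, Germ.coe_eq, EventuallyEq, ← Ultrafilter.eventually_not]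
    exact hx.mono fun _ hi => hi.1
  · change ultrapowerValuation U w x ≠ 0
    rw [ultrapowerValuation_coe, Ne, ← mkWithTop_zero, mkWithTop_inj, ← Ultrafilter.eventually_not]
    exact hx.mono fun _ hi => hi.2

theorem ValuationOn.ultrapower_degLEHens {n : ℕ} (hw : ∀ᶠ i in U, (w i).DegLEHens n) :
    (ValuationOn.ultrapower U w).DegLEHens n := by
  intro f hf hcoeff a ha hfa hf'a
  -- `f` comes from a polynomial `P` over `ι → K` of the same degree, with components `F i`.
  obtain ⟨P, rfl, hPdeg⟩ := exists_natDegree_eq_of_mem_lifts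
    (mem_lifts_of_surjective (f := Germ.coeRingHom (U : Filter ι)) Quot.mk_surjective f)
  induction a using Germ.inductionOn with | h A => ?_
  set F : ι → K[X] := fun i => P.map (Pi.evalRingHom (fun _ => K) i)
  have hF_eval (g : ι → K) :
      (P.map (Germ.coeRingHom U)).eval ↑g = ↑(fun i => (F i).eval (g i)) :=
    Germ.eval_map_coeRingHom _ P g
  have hF'_eval (g : ι → K) :
      (P.map (Germ.coeRingHom U)).derivative.eval ↑g = ↑(fun i => (F i).derivative.eval (g i)) := by
    simpa only [F, derivative_map] using Germ.eval_map_coeRingHom _ P.derivative g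
  have hF_coeff : ∀ᶠ i in U, ∀ j, 0 ≤ (w i).v ((F i).coeff j) := by
    have hlow : ∀ᶠ i in U, ∀ j ∈ Finset.range (P.natDegree + 1), 0 ≤ (w i).v (P.coeff j i) :=
      (eventually_all_finset _).2 fun j _ =>
        ValuationOn.zero_le_ultrapower_v_coe.1 (by simpa using hcoeff j)
    filter_upwards [hlow] with i hi j
    rw [coeff_map, Pi.evalRingHom_apply]
    rcases le_or_gt j P.natDegree with hj | hj
    · exact hi j (Finset.mem_range_succ_iff.2 hj)
    · rw [coeff_eq_zero_of_natDegree_lt hj, Pi.zero_apply, ((w i).isVal.1 _).2 rfl]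
      exact le_top
  have hroots : ∀ᶠ i in U, ∃ b, 0 ≤ (w i).v b ∧ (F i).eval b = 0 ∧ 0 < (w i).v (b - A i) := by
    rw [hF_eval] at hfa
    rw [hF'_eval] at hf'a
    filter_upwards [hw, hF_coeff, ValuationOn.zero_le_ultrapower_v_coe.1 ha,
      ValuationOn.zero_lt_ultrapower_v_coe.1 hfa,
      Ultrafilter.eventually_not.2 (mt ValuationOn.zero_lt_ultrapower_v_coe.2 hf'a)]
      with i hens hcoeff ha hfa hf'a
    exact hens (F i) (natDegree_map_le.trans (hPdeg ▸ hf)) hcoeff (A i) ha hfa hf'a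
  obtain ⟨B, hB⟩ := hroots.choice
  refine ⟨B, ValuationOn.zero_le_ultrapower_v_coe.2 (hB.mono fun _ hi => hi.1), ?_,
    ValuationOn.zero_lt_ultrapower_v_coe.2 (hB.mono fun _ hi => hi.2.2)⟩
  rw [hF_eval, ← Germ.coe_zero, Germ.coe_eq]
  exact hB.mono fun _ hi => hi.2.1

end Ultrapower

theorem ringElemEquiv_germ {ι : Type*} (U : Ultrafilter ι) (K : Type*) [Field K] :
    RingElemEquiv K (Germ (U : Filter ι) K) := by
  let := compatibleRingOfRing K
  let := compatibleRingOfRing (Germ (U : Filter ι) K)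
  have los : K ≅[Language.ring] (U : Filter ι).Product fun _ => K := by
    refine elementarilyEquivalent_iff.2 fun φ => ?_
    rw [Ultraproduct.sentence_realize]
    exact eventually_const.symm
  let e : Language.ring.Equiv ((U : Filter ι).Product fun _ => K) (Germ (U : Filter ι) K) :=
    { Equiv.refl _ with
      map_fun' := by
        intro n F x
        obtain ⟨g, rfl⟩ : ∃ g : Fin n → ι → K,
            (fun i => (g i : (U : Filter ι).Product fun _ => K)) = x :=
          ⟨fun i => (x i).out, funext fun i => Quotient.out_eq' (x i)⟩
        exact (Ultraproduct.funMap_cast (M := fun _ => K) F g).trans (by cases F <;> rfl)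
      map_rel' := fun r => r.elim }
  exact los.trans (StrongHomClass.elementarilyEquivalent e)

theorem stmt7 (K : Type u) [Field K]
    (h : ∀ n : ℕ, ∃ w : ValuationOn K, w.Nontriv ∧ w.DegLEHens n) :
    ∃ W : HenselianFieldBundle.{u}, RingElemEquiv K W.L := by
  choose w hw_nontriv hw_hens using h
  let U := hyperfilter ℕ
  refine ⟨⟨Germ (U : Filter ℕ) K, ValuationOn.ultrapower U w,
    ValuationOn.ultrapower_nontriv (.of_forall hw_nontriv),
    fun n => ValuationOn.ultrapower_degLEHens ?_⟩, ringElemEquiv_germ U K⟩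
  filter_upwards [(eventually_ge_atTop n).filter_mono Nat.hyperfilter_le_atTop] with i hi
  exact (hw_hens i).mono hi
end
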